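/- arXiv:2002.04288 — 7 statements merged into one kernel-verified Lean document; each statement's English description precedes it below -/
import Mathlib

section
/- Let X be a real Hilbert space, W a closed subspace of X, B : X → X → ℝ linear and continuous in its second argument, strongly monotone with constant ν > 0 and Lipschitz continuous with constant L > 0, and let f : X → ℝ be a continuous linear functional. Then there exists a unique u_N ∈ W such that B u_N v = f v for all v ∈ W. (Well-posedness of the Galerkin/reduced-basis problem obtained by restricting the quasilinear variational problem to a subspace.) -/
open RealInnerProductSpace

/-- Well-posedness of the Galerkin (reduced-basis) problem: restricting a
strongly monotone, Lipschitz continuous quasilinear variational problem to a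
closed subspace yields a unique solution. -/
theorem galerkin_well_posed
    {X : Type*} [NormedAddCommGroup X] [InnerProductSpace ℝ X] [CompleteSpace X]
    (W : Submodule ℝ X) (hW : IsClosed (W : Set X))
    (B : X → X →L[ℝ] ℝ) (ν L : ℝ) (hν : 0 < ν) (hL : 0 < L)
    (hmono : ∀ v w : X, ν * ‖v - w‖ ^ 2 ≤ B v (v - w) - B w (v - w))
    (hlip : ∀ u w v : X, |B u v - B w v| ≤ L * ‖u - w‖ * ‖v‖)
    (f : X →L[ℝ] ℝ) :
    ∃! uN : X, uN ∈ W ∧ ∀ v ∈ W, B uN v = f v := by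
  haveI : CompleteSpace W := hW.completeSpace_coe
  haveI : Nonempty W := ⟨0⟩
  -- uniqueness from strong monotonicity
  have uniq : ∀ u₁ u₂ : X, u₁ ∈ W → u₂ ∈ W → (∀ v ∈ W, B u₁ v = f v) →
      (∀ v ∈ W, B u₂ v = f v) → u₁ = u₂ := by
    intro u₁ u₂ h₁ h₂ hs₁ hs₂
    have hv : u₁ - u₂ ∈ W := W.sub_mem h₁ h₂
    have h := hmono u₁ u₂
    rw [hs₁ _ hv, hs₂ _ hv, sub_self] at h
    have hsq : ‖u₁ - u₂‖ ^ 2 ≤ 0 := by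
      by_contra hcon
      push_neg at hcon
      nlinarith
    have h0 : ‖u₁ - u₂‖ ^ 2 = 0 := le_antisymm hsq (sq_nonneg _)
    have h0' : ‖u₁ - u₂‖ = 0 := by
      exact pow_eq_zero_iff two_ne_zero |>.mp h0
    rwa [norm_eq_zero, sub_eq_zero] at h0'
  -- a Lipschitz constant that dominates ν
  set L' : ℝ := max L ν with hL'def
  have hL'pos : 0 < L' := lt_of_lt_of_le hL (le_max_left _ _)
  have hνL' : ν ≤ L' := le_max_right _ _
  have hlip' : ∀ u w v : X, |B u v - B w v| ≤ L' * ‖u - w‖ * ‖v‖ := by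
    intro u w v
    refine (hlip u w v).trans ?_
    exact mul_le_mul_of_nonneg_right
      (mul_le_mul_of_nonneg_right (le_max_left _ _) (norm_nonneg _)) (norm_nonneg _)
  -- the Riesz representative in W of v ↦ B u v - f v
  obtain ⟨g, hg⟩ : ∃ g : W → W, ∀ u v : W, ⟪g u, v⟫ = B (u : X) (v : X) - f (v : X) := by
    refine ⟨fun u => (InnerProductSpace.toDual ℝ W).symm ((B (u : X) - f).comp W.subtypeL),
      fun u v => ?_⟩
    rw [InnerProductSpace.toDual_symm_apply]
    simp
  have hgd : ∀ u w v : W, ⟪g u - g w, v⟫ = B (u : X) (v : X) - B (w : X) (v : X) := by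
    intro u w v
    rw [inner_sub_left, hg, hg]; ring
  have hcoenorm : ∀ x : W, ‖(x : X)‖ = ‖x‖ := fun x => rfl
  have hcsub : ∀ x y : W, ((x - y : W) : X) = (x : X) - (y : X) := fun x y => rfl
  have hglip : ∀ u w : W, ‖g u - g w‖ ≤ L' * ‖u - w‖ := by
    intro u w
    rcases eq_or_lt_of_le (norm_nonneg (g u - g w)) with h | h
    · rw [← h]; positivity
    · have h1 : ‖g u - g w‖ ^ 2 = B (u : X) ((g u - g w : W) : X)
          - B (w : X) ((g u - g w : W) : X) := by
        rw [← hgd, real_inner_self_eq_norm_sq]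
      have h2 := hlip' (u : X) (w : X) ((g u - g w : W) : X)
      rw [abs_le] at h2
      have hnn : ‖(u : X) - (w : X)‖ = ‖u - w‖ := by rw [← hcsub]; exact hcoenorm _
      have hnd : ‖((g u - g w : W) : X)‖ = ‖g u - g w‖ := hcoenorm _
      rw [hnn, hnd] at h2
      nlinarith [h2.2]
  have hgmono : ∀ u w : W, ν * ‖u - w‖ ^ 2 ≤ ⟪g u - g w, u - w⟫ := by
    intro u w
    have h := hmono (u : X) (w : X)
    have hnn : ‖(u : X) - (w : X)‖ = ‖u - w‖ := by rw [← hcsub]; exact hcoenorm _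
    rw [hgd u w (u - w), hcsub]
    rw [hnn] at h
    exact h
  -- contraction parameters
  set ρ : ℝ := ν / L' ^ 2 with hρdef
  have hρpos : 0 < ρ := by positivity
  have hρL : ρ * L' ^ 2 = ν := by
    rw [hρdef]; field_simp
  set k : ℝ := 1 - ρ * ν with hkdef
  have hk0 : 0 ≤ k := by
    have hh : ρ * ν ≤ 1 := by
      rw [hρdef, div_mul_eq_mul_div, div_le_one (by positivity)]
      nlinarith
    rw [hkdef]; linarith
  have hk1 : k < 1 := by
    have : 0 < ρ * ν := mul_pos hρpos hν
    rw [hkdef]; linarith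
  obtain ⟨T, hT⟩ : ∃ T : W → W, ∀ u, T u = u - ρ • g u := ⟨_, fun _ => rfl⟩
  have key : ∀ u w : W, ‖T u - T w‖ ^ 2 ≤ k * ‖u - w‖ ^ 2 := by
    intro u w
    have expand : T u - T w = (u - w) - ρ • (g u - g w) := by
      rw [hT, hT, smul_sub]; abel
    rw [expand, norm_sub_sq_real, real_inner_smul_right, real_inner_comm, norm_smul,
      Real.norm_eq_abs, abs_of_nonneg hρpos.le]
    have h1 := hgmono u w
    have h2 := hglip u w
    have h3 : ‖g u - g w‖ ^ 2 ≤ (L' * ‖u - w‖) ^ 2 := by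
      nlinarith [norm_nonneg (g u - g w), norm_nonneg (u - w)]
    have h4 : ρ * (ν * ‖u - w‖ ^ 2) ≤ ρ * ⟪g u - g w, u - w⟫ :=
      mul_le_mul_of_nonneg_left h1 hρpos.le
    have h5 : ρ ^ 2 * ‖g u - g w‖ ^ 2 ≤ ρ * ν * ‖u - w‖ ^ 2 := by
      calc ρ ^ 2 * ‖g u - g w‖ ^ 2 ≤ ρ ^ 2 * (L' * ‖u - w‖) ^ 2 := by
            exact mul_le_mul_of_nonneg_left h3 (sq_nonneg ρ)
        _ = ρ * ν * ‖u - w‖ ^ 2 := by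
            linear_combination (ρ * ‖u - w‖ ^ 2) * hρL
    rw [hkdef]
    linarith [h4, h5]
  -- Banach fixed point
  set c : ℝ := Real.sqrt k with hcdef
  have hc0 : 0 ≤ c := Real.sqrt_nonneg k
  have hcsq : c ^ 2 = k := Real.sq_sqrt hk0
  have hc1 : c < 1 := by nlinarith
  have hdist : ∀ u w : W, dist (T u) (T w) ≤ c * dist u w := by
    intro u w
    rw [dist_eq_norm, dist_eq_norm]
    have hk := key u w
    rw [← hcsq] at hk
    nlinarith [norm_nonneg (T u - T w), norm_nonneg (u - w),
      mul_nonneg hc0 (norm_nonneg (u - w))]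
  have hC : ContractingWith ⟨c, hc0⟩ T := by
    constructor
    · exact_mod_cast hc1
    · exact LipschitzWith.of_dist_le_mul fun u w => hdist u w
  set u : W := hC.fixedPoint T with hudef
  have hfix : T u = u := hC.fixedPoint_isFixedPt
  have hgu : g u = 0 := by
    rw [hT] at hfix
    have h2 : ρ • g u = 0 := sub_eq_self.mp hfix
    rcases smul_eq_zero.mp h2 with h3 | h3
    · exact absurd h3 hρpos.ne'
    · exact h3
  have sol : ∀ v ∈ W, B (u : X) v = f v := by
    intro v hv
    have hh := hg u ⟨v, hv⟩
    rw [hgu, inner_zero_left] at hh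
    have := hh.symm
    linarith
  exact ⟨(u : X), ⟨u.2, sol⟩, fun y ⟨hy, hsy⟩ => uniq y (u : X) hy u.2 hsy sol⟩
end

section
/- Let X be a real Hilbert space, W a closed subspace of X, and f : X → ℝ linear. Let B : X → X → ℝ be linear and continuous in its second argument and Lipschitz continuous with constant L > 0, and let B_M : X → X → ℝ be linear and continuous in its second argument and strongly monotone with constant ν̃ > 0. Assume that |B w v − B_M w v| ≤ ε·‖w‖·‖v‖ for all w, v ∈ X, with some ε ≥ 0. Let u ∈ X satisfy B u v = f v for all v ∈ X, and let u_{N,M} ∈ W satisfy B_M u_{N,M} v = f v for all v ∈ W. Then for every w_N ∈ W: ‖u − u_{N,M}‖ ≤ (1 + L/ν̃)·‖u − w_N‖ + (ε/ν̃)·‖w_N‖. (Core quasi-optimality estimate (3.2.2) in the proof of Proposition 3.1, the a-priori error bound for the RB-EIM approximation.) -/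
/-- Core quasi-optimality estimate (3.2.2) in the proof of Proposition 3.1:
a-priori error bound for the RB-EIM approximation. -/
theorem rb_eim_quasi_optimality
    {X : Type*} [NormedAddCommGroup X] [InnerProductSpace ℝ X] [CompleteSpace X]
    (W : Submodule ℝ X) (hW : IsClosed (W : Set X))
    (f : X →ₗ[ℝ] ℝ)
    (B BM : X → X →L[ℝ] ℝ) (L ν' ε : ℝ) (hL : 0 < L) (hν' : 0 < ν') (hε : 0 ≤ ε)
    (hlip : ∀ u w v : X, |B u v - B w v| ≤ L * ‖u - w‖ * ‖v‖)
    (hmono : ∀ v w : X, ν' * ‖v - w‖ ^ 2 ≤ BM v (v - w) - BM w (v - w))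
    (hEIM : ∀ w v : X, |B w v - BM w v| ≤ ε * ‖w‖ * ‖v‖)
    (u : X) (hu : ∀ v : X, B u v = f v)
    (uNM : X) (huNM : uNM ∈ W) (hsol : ∀ v ∈ W, BM uNM v = f v)
    (wN : X) (hwN : wN ∈ W) :
    ‖u - uNM‖ ≤ (1 + L / ν') * ‖u - wN‖ + (ε / ν') * ‖wN‖ := by
  set e := wN - uNM with he
  have heW : e ∈ W := W.sub_mem hwN huNM
  have key : ν' * ‖e‖ ^ 2 ≤ (ε * ‖wN‖ + L * ‖u - wN‖) * ‖e‖ := by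
    have h1 : ν' * ‖e‖ ^ 2 ≤ BM wN e - BM uNM e := hmono wN uNM
    have h2 : BM uNM e = B u e := by rw [hsol e heW, hu e]
    calc ν' * ‖e‖ ^ 2 ≤ BM wN e - B u e := by rw [← h2]; exact h1
      _ = -(B wN e - BM wN e) + -(B u e - B wN e) := by ring
      _ ≤ |B wN e - BM wN e| + |B u e - B wN e| := by
          gcongr <;> [exact neg_le_abs _; exact neg_le_abs _]
      _ ≤ ε * ‖wN‖ * ‖e‖ + L * ‖u - wN‖ * ‖e‖ := by
          gcongr <;> [exact hEIM wN e; exact hlip u wN e]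
      _ = (ε * ‖wN‖ + L * ‖u - wN‖) * ‖e‖ := by ring
  have hbound : ‖e‖ ≤ (ε * ‖wN‖ + L * ‖u - wN‖) / ν' := by
    rcases eq_or_lt_of_le (norm_nonneg e) with h0 | h0
    · rw [← h0]
      positivity
    · rw [le_div_iff₀ hν']
      have := (mul_le_mul_iff_of_pos_right h0).mp (by
        calc ν' * ‖e‖ * ‖e‖ = ν' * ‖e‖ ^ 2 := by ring
          _ ≤ (ε * ‖wN‖ + L * ‖u - wN‖) * ‖e‖ := key)
      linarith
  calc ‖u - uNM‖ = ‖(u - wN) + e‖ := by rw [he]; congr 1; abel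
    _ ≤ ‖u - wN‖ + ‖e‖ := norm_add_le _ _
    _ ≤ ‖u - wN‖ + (ε * ‖wN‖ + L * ‖u - wN‖) / ν' := by linarith
    _ = (1 + L / ν') * ‖u - wN‖ + (ε / ν') * ‖wN‖ := by field_simp; ring
end

section
/- Let X be a real Hilbert space, W a closed subspace of X, and f : X → ℝ linear. Let B : X → X → ℝ be linear and continuous in its second argument and Lipschitz continuous with constant L > 0, and let B_M : X → X → ℝ be linear and continuous in its second argument and strongly monotone with constant ν̃ > 0; assume |B w v − B_M w v| ≤ ε·‖w‖·‖v‖ for all w, v ∈ X with ε ≥ 0. Let u ∈ X satisfy B u v = f v for all v ∈ X, and u_{N,M} ∈ W satisfy B_M u_{N,M} v = f v for all v ∈ W. Let X̂ be a real Hilbert space and T : X̂ → X a continuous linear isomorphism with constants 0 < C₁ ≤ C₂ such that C₁‖v̂‖²_{X̂} ≤ ‖T v̂‖²_X ≤ C₂‖v̂‖²_{X̂} for all v̂ ∈ X̂. Then for every ŵ_N ∈ T⁻¹(W): ‖T⁻¹u − T⁻¹u_{N,M}‖_{X̂} ≤ √(C₂/C₁) · ( (1 + L/ν̃)·‖T⁻¹u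 − ŵ_N‖_{X̂} + (ε/ν̃)·‖ŵ_N‖_{X̂} ). (Proposition 3.1: a-priori error bound on the reference domain with geometric constants C₁, C₂.) -/
/-- Proposition 3.1: a-priori error bound for the RB-EIM approximation on the
reference domain, with the geometric constants `C₁`, `C₂` coming from the
piecewise affine transformation `T`. -/
theorem rb_eim_a_priori_error_bound
    {X Y : Type*} [NormedAddCommGroup X] [InnerProductSpace ℝ X] [CompleteSpace X]
    [NormedAddCommGroup Y] [InnerProductSpace ℝ Y] [CompleteSpace Y]
    (W : Submodule ℝ X) (hW : IsClosed (W : Set X))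
    (f : X →ₗ[ℝ] ℝ)
    (B BM : X → X →L[ℝ] ℝ) (L ν' ε : ℝ) (hL : 0 < L) (hν' : 0 < ν') (hε : 0 ≤ ε)
    (hlip : ∀ u w v : X, |B u v - B w v| ≤ L * ‖u - w‖ * ‖v‖)
    (hmono : ∀ v w : X, ν' * ‖v - w‖ ^ 2 ≤ BM v (v - w) - BM w (v - w))
    (hEIM : ∀ w v : X, |B w v - BM w v| ≤ ε * ‖w‖ * ‖v‖)
    (u : X) (hu : ∀ v : X, B u v = f v)
    (uNM : X) (huNM : uNM ∈ W) (hsol : ∀ v ∈ W, BM uNM v = f v)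
    (T : Y ≃L[ℝ] X) (C₁ C₂ : ℝ) (hC₁ : 0 < C₁) (hC₁₂ : C₁ ≤ C₂)
    (hT : ∀ vh : Y, C₁ * ‖vh‖ ^ 2 ≤ ‖T vh‖ ^ 2 ∧ ‖T vh‖ ^ 2 ≤ C₂ * ‖vh‖ ^ 2)
    (wNh : Y) (hwNh : T wNh ∈ W) :
    ‖T.symm u - T.symm uNM‖ ≤
      Real.sqrt (C₂ / C₁) *
        ((1 + L / ν') * ‖T.symm u - wNh‖ + (ε / ν') * ‖wNh‖) := by
  have hC₂ : 0 < C₂ := lt_of_lt_of_le hC₁ hC₁₂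
  set wN := T wNh with hwN
  set e := uNM - wN with he
  have heW : e ∈ W := W.sub_mem huNM hwNh
  -- key estimate: ν' ‖e‖ ≤ L ‖u - wN‖ + ε ‖wN‖
  have key : ν' * ‖e‖ ≤ L * ‖u - wN‖ + ε * ‖wN‖ := by
    have h1 : ν' * ‖e‖ ^ 2 ≤ BM uNM e - BM wN e := hmono uNM wN
    have h2 : BM uNM e = B u e := by rw [hsol e heW, hu e]
    have h3 : BM uNM e - BM wN e ≤ L * ‖u - wN‖ * ‖e‖ + ε * ‖wN‖ * ‖e‖ := by
      have ha := (abs_le.mp (hlip u wN e)).2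
      have hb := (abs_le.mp (hEIM wN e)).2
      have hh : BM uNM e - BM wN e = (B u e - B wN e) + (B wN e - BM wN e) := by
        rw [h2]; ring
      rw [hh]; linarith
    have hne : ν' * ‖e‖ ^ 2 ≤ (L * ‖u - wN‖ + ε * ‖wN‖) * ‖e‖ := by nlinarith
    rcases eq_or_lt_of_le (norm_nonneg e) with h0 | h0
    · rw [← h0, mul_zero]
      have : 0 ≤ L * ‖u - wN‖ := mul_nonneg hL.le (norm_nonneg _)
      have : 0 ≤ ε * ‖wN‖ := mul_nonneg hε (norm_nonneg _)
      linarith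
    · nlinarith
  have hediv : ‖e‖ ≤ (L / ν') * ‖u - wN‖ + (ε / ν') * ‖wN‖ := by
    rw [div_mul_eq_mul_div, div_mul_eq_mul_div, ← add_div, le_div_iff₀ hν']
    nlinarith
  have hsplit : ‖u - uNM‖ ≤ ‖u - wN‖ + ‖e‖ := by
    have hh : u - uNM = (u - wN) - e := by rw [he]; abel
    rw [hh]; exact norm_sub_le _ _
  have hX : ‖u - uNM‖ ≤ (1 + L / ν') * ‖u - wN‖ + (ε / ν') * ‖wN‖ := by
    nlinarith
  -- norm comparisons
  have hC₁s : 0 < Real.sqrt C₁ := Real.sqrt_pos.mpr hC₁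
  have hlow : ∀ v : Y, Real.sqrt C₁ * ‖v‖ ≤ ‖T v‖ := fun v => by
    have h := Real.sqrt_le_sqrt (hT v).1
    rwa [Real.sqrt_mul hC₁.le, Real.sqrt_sq (norm_nonneg _),
      Real.sqrt_sq (norm_nonneg _)] at h
  have hupp : ∀ v : Y, ‖T v‖ ≤ Real.sqrt C₂ * ‖v‖ := fun v => by
    have h := Real.sqrt_le_sqrt (hT v).2
    rwa [Real.sqrt_mul hC₂.le, Real.sqrt_sq (norm_nonneg _),
      Real.sqrt_sq (norm_nonneg _)] at h
  have h4 : ‖u - wN‖ ≤ Real.sqrt C₂ * ‖T.symm u - wNh‖ := by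
    have hh : T (T.symm u - wNh) = u - wN := by
      rw [map_sub, T.apply_symm_apply]
    calc ‖u - wN‖ = ‖T (T.symm u - wNh)‖ := by rw [hh]
      _ ≤ Real.sqrt C₂ * ‖T.symm u - wNh‖ := hupp _
  have h5 : ‖wN‖ ≤ Real.sqrt C₂ * ‖wNh‖ := hupp wNh
  have h6 : Real.sqrt C₁ * ‖T.symm u - T.symm uNM‖ ≤ ‖u - uNM‖ := by
    have hh : T (T.symm u - T.symm uNM) = u - uNM := by
      rw [map_sub, T.apply_symm_apply, T.apply_symm_apply]
    calc Real.sqrt C₁ * ‖T.symm u - T.symm uNM‖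
        ≤ ‖T (T.symm u - T.symm uNM)‖ := hlow _
      _ = ‖u - uNM‖ := by rw [hh]
  have hνdiv : 0 ≤ 1 + L / ν' := by positivity
  have hεdiv : 0 ≤ ε / ν' := by positivity
  have h7 : Real.sqrt C₁ * ‖T.symm u - T.symm uNM‖ ≤
      Real.sqrt C₂ * ((1 + L / ν') * ‖T.symm u - wNh‖ + (ε / ν') * ‖wNh‖) := by
    have := mul_le_mul_of_nonneg_left h4 hνdiv
    have := mul_le_mul_of_nonneg_left h5 hεdiv
    nlinarith
  rw [Real.sqrt_div hC₂.le, div_mul_eq_mul_div, le_div_iff₀ hC₁s]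
  nlinarith
end

section
/- Let X be a real Hilbert space and f : X → ℝ linear. Let B : X → X → ℝ be linear and continuous in its second argument and strongly monotone with constant ν > 0. Let u ∈ X satisfy B u v = f v for all v ∈ X. Let u_{N,M} ∈ X, let B_M : X → X → ℝ be linear and continuous in its second argument, and assume |B u_{N,M} v − B_M u_{N,M} v| ≤ δ·‖u_{N,M}‖·‖v‖ for all v ∈ X, with δ ≥ 0. Suppose the residual r : X → ℝ, r(v) = f v − B_M u_{N,M} v, is a continuous linear functional. Then ν·‖u − u_{N,M}‖ ≤ ‖r‖_{X'} + δ·‖u_{N,M}‖. (Core monotonicity estimate behind Proposition 3.2, the residual-based a-posteriori error bound for the RB-EIM approximation.) -/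
/-- Core monotonicity estimate behind Proposition 3.2: residual-based
a-posteriori error bound for the RB-EIM approximation. -/
theorem rb_eim_a_posteriori_core
    {X : Type*} [NormedAddCommGroup X] [InnerProductSpace ℝ X] [CompleteSpace X]
    (f : X →ₗ[ℝ] ℝ)
    (B BM : X → X →L[ℝ] ℝ) (ν δ : ℝ) (hν : 0 < ν) (hδ : 0 ≤ δ)
    (hmono : ∀ v w : X, ν * ‖v - w‖ ^ 2 ≤ B v (v - w) - B w (v - w))
    (u : X) (hu : ∀ v : X, B u v = f v)
    (uNM : X)
    (hEIM : ∀ v : X, |B uNM v - BM uNM v| ≤ δ * ‖uNM‖ * ‖v‖)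
    (r : X →L[ℝ] ℝ) (hr : ∀ v : X, r v = f v - BM uNM v) :
    ν * ‖u - uNM‖ ≤ ‖r‖ + δ * ‖uNM‖ := by
  set e := u - uNM with he
  rcases eq_or_lt_of_le (norm_nonneg e) with h0 | h0
  · rw [← h0, mul_zero]
    positivity
  · have key : ν * ‖e‖ ^ 2 ≤ (‖r‖ + δ * ‖uNM‖) * ‖e‖ := by
      calc ν * ‖e‖ ^ 2 ≤ B u e - B uNM e := hmono u uNM
        _ = r e + (BM uNM e - B uNM e) := by rw [hr, hu]; ring
        _ ≤ |r e| + |BM uNM e - B uNM e| :=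
            le_trans (add_le_add (le_abs_self _) (le_abs_self _)) le_rfl
        _ ≤ ‖r‖ * ‖e‖ + δ * ‖uNM‖ * ‖e‖ := by
            apply add_le_add
            · exact (r.le_opNorm e)
            · rw [abs_sub_comm]; exact hEIM e
        _ = (‖r‖ + δ * ‖uNM‖) * ‖e‖ := by ring
    rw [sq] at key
    nlinarith
end

section
/- Let X be a real Hilbert space and f : X → ℝ linear. Let B : X → X → ℝ be linear and continuous in its second argument and strongly monotone with constant ν > 0, and let u ∈ X satisfy B u v = f v for all v ∈ X. Let u_{N,M} ∈ X, let B_M : X → X → ℝ be linear and continuous in its second argument with |B u_{N,M} v − B_M u_{N,M} v| ≤ δ·‖u_{N,M}‖·‖v‖ for all v ∈ X (δ ≥ 0). Let X̂ be a real Hilbert space and T : X̂ → X a continuous linear isomorphism with constants 0 < C₁ ≤ C₂ such that C₁‖v̂‖²_{X̂} ≤ ‖T v̂‖²_X ≤ C₂‖v̂‖²_{X̂} for all v̂ ∈ X̂. Suppose the transferred residual r̂ : X̂ → ℝ, r̂(v̂) = f(T v̂) − B_M u_{N,M} (T v̂), is a continuous linear functional on X̂. Then ‖T⁻¹u − T⁻¹u_{N,M}‖_{X̂}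 ≤ (1/(ν·C₁))·( ‖r̂‖_{X̂'} + C₂·δ·‖T⁻¹u_{N,M}‖_{X̂} ). (Proposition 3.2: a-posteriori error bound Δ_{N,M}(p) on the reference domain.) -/
/-- Proposition 3.2: residual-based a-posteriori error bound `Δ_{N,M}(p)` for
the RB-EIM approximation on the reference domain. -/
theorem rb_eim_a_posteriori_error_bound
    {X Y : Type*} [NormedAddCommGroup X] [InnerProductSpace ℝ X] [CompleteSpace X]
    [NormedAddCommGroup Y] [InnerProductSpace ℝ Y] [CompleteSpace Y]
    (f : X →ₗ[ℝ] ℝ)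
    (B BM : X → X →L[ℝ] ℝ) (ν δ : ℝ) (hν : 0 < ν) (hδ : 0 ≤ δ)
    (hmono : ∀ v w : X, ν * ‖v - w‖ ^ 2 ≤ B v (v - w) - B w (v - w))
    (u : X) (hu : ∀ v : X, B u v = f v)
    (uNM : X)
    (hEIM : ∀ v : X, |B uNM v - BM uNM v| ≤ δ * ‖uNM‖ * ‖v‖)
    (T : Y ≃L[ℝ] X) (C₁ C₂ : ℝ) (hC₁ : 0 < C₁) (hC₁₂ : C₁ ≤ C₂)
    (hT : ∀ vh : Y, C₁ * ‖vh‖ ^ 2 ≤ ‖T vh‖ ^ 2 ∧ ‖T vh‖ ^ 2 ≤ C₂ * ‖vh‖ ^ 2)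
    (rh : Y →L[ℝ] ℝ) (hrh : ∀ vh : Y, rh vh = f (T vh) - BM uNM (T vh)) :
    ‖T.symm u - T.symm uNM‖ ≤
      (1 / (ν * C₁)) * (‖rh‖ + C₂ * δ * ‖T.symm uNM‖) := by
  have hC₂ : (0:ℝ) ≤ C₂ := hC₁.le.trans hC₁₂
  set e : X := u - uNM with he
  set eh : Y := T.symm u - T.symm uNM with heh
  have hTe : T eh = e := by
    simp [heh, he, map_sub]
  -- √C₂ bound
  have hs : Real.sqrt C₂ * Real.sqrt C₂ = C₂ := Real.mul_self_sqrt hC₂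
  have key : ∀ vh : Y, ‖T vh‖ ≤ Real.sqrt C₂ * ‖vh‖ := by
    intro vh
    have h2 := (hT vh).2
    nlinarith [norm_nonneg (T vh), norm_nonneg vh, Real.sqrt_nonneg C₂,
      mul_nonneg (Real.sqrt_nonneg C₂) (norm_nonneg vh)]
  have hue : ‖uNM‖ ≤ Real.sqrt C₂ * ‖T.symm uNM‖ := by
    have := key (T.symm uNM); simpa using this
  have hee : ‖e‖ ≤ Real.sqrt C₂ * ‖eh‖ := by
    have := key eh; rwa [hTe] at this
  -- residual identity
  have hre : rh eh = f e - BM uNM e := by rw [hrh eh, hTe]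
  -- the monotonicity chain
  have h1 : ν * ‖e‖ ^ 2 ≤ B u e - B uNM e := hmono u uNM
  have h2 : B u e = f e := hu e
  have h3 : rh eh ≤ ‖rh‖ * ‖eh‖ := (le_abs_self _).trans (rh.le_opNorm eh)
  have h4' : BM uNM e - B uNM e ≤ δ * ‖uNM‖ * ‖e‖ := by
    have := hEIM e
    have := abs_le.mp this
    linarith [this.1]
  have h5 : ν * ‖e‖ ^ 2 ≤ ‖rh‖ * ‖eh‖ + δ * ‖uNM‖ * ‖e‖ := by
    have : ν * ‖e‖ ^ 2 ≤ rh eh + (BM uNM e - B uNM e) := by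
      rw [hre]; linarith [h1, h2.symm ▸ h1]
    linarith [h3, h4']
  -- C₁ bound
  have h6 : C₁ * ‖eh‖ ^ 2 ≤ ‖e‖ ^ 2 := by
    have := (hT eh).1; rwa [hTe] at this
  have h7 : ν * (C₁ * ‖eh‖ ^ 2) ≤ ‖rh‖ * ‖eh‖ + δ * ‖uNM‖ * ‖e‖ :=
    le_trans (by nlinarith) h5
  have h8 : δ * ‖uNM‖ * ‖e‖ ≤ C₂ * δ * ‖T.symm uNM‖ * ‖eh‖ := by
    have hm : ‖uNM‖ * ‖e‖ ≤ (Real.sqrt C₂ * ‖T.symm uNM‖) * (Real.sqrt C₂ * ‖eh‖) :=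
      mul_le_mul hue hee (norm_nonneg _)
        (mul_nonneg (Real.sqrt_nonneg _) (norm_nonneg _))
    have h := mul_le_mul_of_nonneg_left hm hδ
    have heq : δ * (Real.sqrt C₂ * ‖T.symm uNM‖ * (Real.sqrt C₂ * ‖eh‖))
        = C₂ * δ * ‖T.symm uNM‖ * ‖eh‖ := by linear_combination (δ * ‖T.symm uNM‖ * ‖eh‖) * hs
    linarith [heq ▸ h]
  have h9 : ν * C₁ * ‖eh‖ ^ 2 ≤ (‖rh‖ + C₂ * δ * ‖T.symm uNM‖) * ‖eh‖ := by
    nlinarith [h7, h8]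
  have hpos : 0 < ν * C₁ := mul_pos hν hC₁
  rw [one_div, inv_mul_eq_div, le_div_iff₀ hpos]
  rcases eq_or_lt_of_le (norm_nonneg eh) with h0 | h0
  · rw [← h0, zero_mul]
    have : 0 ≤ C₂ * δ * ‖T.symm uNM‖ := by positivity
    linarith [norm_nonneg rh]
  · have := le_of_mul_le_mul_right (by nlinarith : ‖eh‖ * (ν * C₁) * ‖eh‖ ≤ (‖rh‖ + C₂ * δ * ‖T.symm uNM‖) * ‖eh‖) h0
    linarith
end

section
/- Let X be a real Hilbert space and f : X → ℝ linear. Let B : X → X → ℝ be linear and continuous in its second argument and strongly monotone with constant ν > 0, and let u ∈ X satisfy B u v = f v for all v ∈ X. Let u_N ∈ X be arbitrary. Let X̂ be a real Hilbert space and T : X̂ → X a continuous linear isomorphism with constants 0 < C₁ ≤ C₂ such that C₁‖v̂‖²_{X̂} ≤ ‖T v̂‖²_X ≤ C₂‖v̂‖²_{X̂} for all v̂ ∈ X̂. Suppose the transferred residual r̂ : X̂ → ℝ, r̂(v̂) = f(T v̂) − B u_N (T v̂), is a continuous linear functional on X̂. Then ‖T⁻¹u − T⁻¹u_N‖_{X̂}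 ≤ ‖r̂‖_{X̂'} / (ν·C₁). (Error bound (3.2.8) for the pure reduced-basis approximation without EIM reduction.) -/
/-- Error bound (3.2.8) for the pure reduced-basis approximation (without EIM
reduction) on the reference domain. -/
theorem rb_a_posteriori_error_bound
    {X Y : Type*} [NormedAddCommGroup X] [InnerProductSpace ℝ X] [CompleteSpace X]
    [NormedAddCommGroup Y] [InnerProductSpace ℝ Y] [CompleteSpace Y]
    (f : X →ₗ[ℝ] ℝ)
    (B : X → X →L[ℝ] ℝ) (ν : ℝ) (hν : 0 < ν)
    (hmono : ∀ v w : X, ν * ‖v - w‖ ^ 2 ≤ B v (v - w) - B w (v - w))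
    (u : X) (hu : ∀ v : X, B u v = f v)
    (uN : X)
    (T : Y ≃L[ℝ] X) (C₁ C₂ : ℝ) (hC₁ : 0 < C₁) (hC₁₂ : C₁ ≤ C₂)
    (hT : ∀ vh : Y, C₁ * ‖vh‖ ^ 2 ≤ ‖T vh‖ ^ 2 ∧ ‖T vh‖ ^ 2 ≤ C₂ * ‖vh‖ ^ 2)
    (rh : Y →L[ℝ] ℝ) (hrh : ∀ vh : Y, rh vh = f (T vh) - B uN (T vh)) :
    ‖T.symm u - T.symm uN‖ ≤ ‖rh‖ / (ν * C₁) := by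
  set eh : Y := T.symm u - T.symm uN with heh
  have hTe : T eh = u - uN := by simp [heh, map_sub]
  have h1 : ν * ‖u - uN‖ ^ 2 ≤ rh eh := by
    have := hmono u uN
    rw [hrh, hTe, ← hu]
    linarith
  have h2 : ν * (C₁ * ‖eh‖ ^ 2) ≤ rh eh := by
    have := (hT eh).1
    rw [hTe] at this
    nlinarith
  have h3 : rh eh ≤ ‖rh‖ * ‖eh‖ := by
    calc rh eh ≤ |rh eh| := le_abs_self _
    _ = ‖rh eh‖ := rfl
    _ ≤ ‖rh‖ * ‖eh‖ := rh.le_opNorm eh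
  rw [le_div_iff₀ (by positivity)]
  rcases eq_or_lt_of_le (norm_nonneg eh) with h | h
  · rw [← h, zero_mul]; exact norm_nonneg rh
  · nlinarith [norm_nonneg rh]
end

section
/- Let X be a real Hilbert space, W a closed subspace of X, and f : X → ℝ linear. Let B : X → X → ℝ be linear and continuous in its second argument and Lipschitz continuous with constant L > 0, and let B_M : X → X → ℝ be linear and continuous in its second argument and strongly monotone with constant ν̃ > 0; assume |B w v − B_M w v| ≤ ε·‖w‖·‖v‖ for all w, v ∈ X with ε ≥ 0. Let u ∈ X satisfy B u v = f v for all v ∈ X, and let u_{N,M} ∈ W satisfy B_M u_{N,M} v = f v for all v ∈ W. Then for every w_N ∈ W: ν̃·‖u_{N,M} − w_N‖ ≤ L·‖u − w_N‖ + ε·‖w_N‖. (Intermediate estimate in the proof of Proposition 3.1, obtained from strong monotonicity of B_M, Galerkin orthogonality, Lipschitz continuity of B, and the EIM perturbation bound.) -/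
/-- Intermediate estimate in the proof of Proposition 3.1, obtained from strong
monotonicity of `B_M`, Galerkin orthogonality, Lipschitz continuity of `B`, and
the EIM perturbation bound. -/
theorem rb_eim_intermediate_estimate
    {X : Type*} [NormedAddCommGroup X] [InnerProductSpace ℝ X] [CompleteSpace X]
    (W : Submodule ℝ X) (hW : IsClosed (W : Set X))
    (f : X →ₗ[ℝ] ℝ)
    (B BM : X → X →L[ℝ] ℝ) (L ν' ε : ℝ) (hL : 0 < L) (hν' : 0 < ν') (hε : 0 ≤ ε)
    (hlip : ∀ u w v : X, |B u v - B w v| ≤ L * ‖u - w‖ * ‖v‖)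
    (hmono : ∀ v w : X, ν' * ‖v - w‖ ^ 2 ≤ BM v (v - w) - BM w (v - w))
    (hEIM : ∀ w v : X, |B w v - BM w v| ≤ ε * ‖w‖ * ‖v‖)
    (u : X) (hu : ∀ v : X, B u v = f v)
    (uNM : X) (huNM : uNM ∈ W) (hsol : ∀ v ∈ W, BM uNM v = f v)
    (wN : X) (hwN : wN ∈ W) :
    ν' * ‖uNM - wN‖ ≤ L * ‖u - wN‖ + ε * ‖wN‖ := by
  set e := uNM - wN with he
  have heW : e ∈ W := W.sub_mem huNM hwN
  rcases eq_or_ne (‖e‖) 0 with h0 | h0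
  · rw [h0, mul_zero]
    positivity
  have hpos : 0 < ‖e‖ := lt_of_le_of_ne (norm_nonneg _) (Ne.symm h0)
  have key : ν' * ‖e‖ ^ 2 ≤ (L * ‖u - wN‖ + ε * ‖wN‖) * ‖e‖ := by
    have h1 := hmono uNM wN
    have h2 : BM uNM e = f e := hsol e heW
    have h3 : B u e = f e := hu e
    have h1' : ν' * ‖e‖ ^ 2 ≤ BM uNM e - BM wN e := h1
    have hchain : ν' * ‖e‖ ^ 2 ≤ (B u e - B wN e) + (B wN e - BM wN e) := by
      linarith [h1', h2, h3]
    calc ν' * ‖e‖ ^ 2 ≤ (B u e - B wN e) + (B wN e - BM wN e) := hchain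
      _ ≤ L * ‖u - wN‖ * ‖e‖ + ε * ‖wN‖ * ‖e‖ :=
        add_le_add (le_trans (le_abs_self _) (hlip u wN e))
          (le_trans (le_abs_self _) (hEIM wN e))
      _ = (L * ‖u - wN‖ + ε * ‖wN‖) * ‖e‖ := by ring
  have := (mul_le_mul_iff_of_pos_right hpos).mp (by nlinarith [key] : ν' * ‖e‖ * ‖e‖ ≤ (L * ‖u - wN‖ + ε * ‖wN‖) * ‖e‖)
  simpa [he] using this
end
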